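/- arXiv:2303.08180 — 4 statements merged into one kernel-verified Lean document; each statement's English description precedes it below -/
import Mathlib

section
/- The linear map ℜ on the Schrödinger algebra S_2 determined on the basis by ℜ(s_{12}) = z and ℜ(u) = 0 for u ∈ {f, h, e, z, x_1, y_1, x_2, y_2} is a 1/2-derivation of S_2, and it is not a scalar multiple of the identity map. -/
noncomputable section

open Submodule

/-- Index type for the standard basis
`{e, f, h, z, x_i, y_i (1 ≤ i ≤ n), s_{jk} (1 ≤ j < k ≤ n)}`
of the Schrödinger algebra `S_n` (indices shifted to start from `0`). -/
inductive SIdx (n : ℕ) : Type where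
  | E : SIdx n
  | F : SIdx n
  | H : SIdx n
  | Z : SIdx n
  | X : Fin n → SIdx n
  | Y : Fin n → SIdx n
  | S : (j k : Fin n) → j < k → SIdx n

/-- Kronecker delta with values in `ℂ`. -/
def kd {n : ℕ} (i j : Fin n) : ℂ := if i = j then 1 else 0

variable {n : ℕ} {L : Type*} [LieRing L] [LieAlgebra ℂ L]

/-- The element `s_{jk}` for arbitrary indices, with the convention
`s_{kj} = -s_{jk}` and `s_{jj} = 0`. -/
def sg (b : Module.Basis (SIdx n) ℂ L) (j k : Fin n) : L :=
  if h : j < k then b (.S j k h)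
  else if h' : k < j then - b (.S k j h')
  else 0

/-- A basis of a complex Lie algebra indexed by `SIdx n` realizes the
Schrödinger algebra `S_n` if the brackets of basis vectors are as follows
(all brackets of basis vectors not determined by the relations below and
anticommutativity are zero). -/
structure IsSchrodinger (b : Module.Basis (SIdx n) ℂ L) : Prop where
  lie_e_f : ⁅b .E, b .F⁆ = b .H
  lie_h_e : ⁅b .H, b .E⁆ = (2 : ℂ) • b .E
  lie_f_h : ⁅b .F, b .H⁆ = (2 : ℂ) • b .F
  lie_x_y : ∀ i j, ⁅b (.X i), b (.Y j)⁆ = kd i j • b .Z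
  lie_x_x : ∀ i j, ⁅b (.X i), b (.X j)⁆ = 0
  lie_y_y : ∀ i j, ⁅b (.Y i), b (.Y j)⁆ = 0
  lie_h_x : ∀ i, ⁅b .H, b (.X i)⁆ = b (.X i)
  lie_h_y : ∀ i, ⁅b .H, b (.Y i)⁆ = - b (.Y i)
  lie_e_y : ∀ i, ⁅b .E, b (.Y i)⁆ = b (.X i)
  lie_e_x : ∀ i, ⁅b .E, b (.X i)⁆ = 0
  lie_f_x : ∀ i, ⁅b .F, b (.X i)⁆ = b (.Y i)
  lie_f_y : ∀ i, ⁅b .F, b (.Y i)⁆ = 0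
  lie_z : ∀ u : SIdx n, ⁅b .Z, b u⁆ = 0
  lie_s_x : ∀ j k i, ⁅sg b j k, b (.X i)⁆ = kd k i • b (.X j) - kd j i • b (.X k)
  lie_s_y : ∀ j k i, ⁅sg b j k, b (.Y i)⁆ = kd k i • b (.Y j) - kd j i • b (.Y k)
  lie_s_s : ∀ j k l m, ⁅sg b j k, sg b l m⁆ =
      kd l k • sg b j m + kd j m • sg b k l + kd m k • sg b l j + kd l j • sg b m k
  lie_e_s : ∀ j k, ⁅b .E, sg b j k⁆ = 0
  lie_f_s : ∀ j k, ⁅b .F, sg b j k⁆ = 0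
  lie_h_s : ∀ j k, ⁅b .H, sg b j k⁆ = 0

/-- A `1/2`-derivation of a complex Lie algebra: a linear map `φ` with
`φ([x,y]) = (1/2)([φ(x),y] + [x,φ(y)])`. -/
def IsHalfDeriv (φ : L →ₗ[ℂ] L) : Prop :=
  ∀ x y : L, φ ⁅x, y⁆ = (2⁻¹ : ℂ) • (⁅φ x, y⁆ + ⁅x, φ y⁆)

/-- The set of basis vectors spanning the even part `(S_n)₀`:
`{e, f, h, z, s_{kl}}`. -/
def evenSet (b : Module.Basis (SIdx n) ℂ L) : Set L :=
  {v | v = b .E ∨ v = b .F ∨ v = b .H ∨ v = b .Z ∨ ∃ j k, ∃ h : j < k, v = b (.S j k h)}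

/-- The set of basis vectors spanning the odd part `(S_n)₁`: `{x_i, y_i}`. -/
def oddSet (b : Module.Basis (SIdx n) ℂ L) : Set L :=
  {v | ∃ i : Fin n, v = b (.X i) ∨ v = b (.Y i)}

/-- The linear map `ℜ` sending `s_{jk}` to `z` and all other basis vectors to `0`. -/
def Rmap (b : Module.Basis (SIdx n) ℂ L) : L →ₗ[ℂ] L :=
  b.constr ℂ fun u => match u with
    | .S _ _ _ => b .Z
    | _ => 0

/-! `ℜ = z ⊗ s₁₂*` takes values in the line of the central element `z`, and it kills
`[S₂, S₂]` because `s₁₂` never occurs in the bracket of two basis vectors. Hence both sides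
of the `1/2`-derivation identity vanish. It is not a scalar since it kills `e` but not `s₁₂`. -/

theorem LinearMap.not_exists_eq_smul_id {R M : Type*} [CommSemiring R] [AddCommMonoid M]
    [Module R M] [NoZeroSMulDivisors R M] (φ : M →ₗ[R] M) {v w : M} (hv : v ≠ 0)
    (hφv : φ v = 0) (hφw : φ w ≠ 0) :
    ¬ ∃ c : R, φ = c • (LinearMap.id : M →ₗ[R] M) := by
  rintro ⟨c, rfl⟩
  have hc : c = 0 := (eq_zero_or_eq_zero_of_smul_eq_zero hφv).resolve_right hv
  simp [hc] at hφw

theorem isHalfDeriv_of_mem_center_of_map_lie_eq_zero (φ : L →ₗ[ℂ] L)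
    (hcenter : ∀ x, φ x ∈ LieAlgebra.center ℂ L) (hlie : ∀ x y : L, φ ⁅x, y⁆ = 0) :
    IsHalfDeriv φ := by
  have hcomm (x y : L) : ⁅y, φ x⁆ = 0 := (LieModule.mem_maxTrivSubmodule ..).mp (hcenter x) y
  intro x y
  rw [hlie, ← lie_skew, hcomm, hcomm, neg_zero, add_zero, smul_zero]

@[simp]
theorem Rmap_basis (b : Module.Basis (SIdx n) ℂ L) (u : SIdx n) :
    Rmap b (b u) = match u with
      | .S _ _ _ => b .Z
      | _ => 0 :=
  b.constr_basis ..

namespace IsSchrodinger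

variable {b : Module.Basis (SIdx n) ℂ L} (hb : IsSchrodinger b)
include hb

theorem basis_Z_mem_center : b .Z ∈ LieAlgebra.center ℂ L := by
  have had : LieAlgebra.ad ℂ L (b .Z) = 0 := b.ext fun u => by simpa using hb.lie_z u
  rw [LieModule.mem_maxTrivSubmodule]
  intro x
  rw [← lie_skew, ← LieAlgebra.ad_apply (R := ℂ), had, LinearMap.zero_apply, neg_zero]

theorem Rmap_mem_center (x : L) : Rmap b x ∈ LieAlgebra.center ℂ L := by
  have hrange : LinearMap.range (Rmap b) ≤ (LieAlgebra.center ℂ L).toSubmodule := by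
    rw [LinearMap.range_eq_map, ← b.span_eq, Submodule.map_span_le]
    rintro _ ⟨u, rfl⟩
    cases u <;> simp [hb.basis_Z_mem_center]
  exact hrange (LinearMap.mem_range_self _ x)

end IsSchrodinger

theorem SIdx.S_eq_S_zero_one (j k : Fin 2) (h : j < k) : SIdx.S j k h = .S 0 1 (by decide) := by
  fin_cases j <;> fin_cases k <;> first | rfl | exact absurd h (by decide)

theorem sg_zero_one (b : Module.Basis (SIdx 2) ℂ L) : sg b 0 1 = b (.S 0 1 (by decide)) :=
  dif_pos _

namespace IsSchrodinger

variable {b : Module.Basis (SIdx 2) ℂ L} (hb : IsSchrodinger b)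
include hb

theorem Rmap_lie_basis (u v : SIdx 2) : Rmap b ⁅b u, b v⁆ = 0 := by
  -- Once `s₀₁` is written as `sg b 0 1`, the relations of `hb` (read in either order) expand
  -- every such bracket in basis vectors other than `s₀₁`, on which `ℜ` vanishes.
  have hZ (x : L) : ⁅b .Z, x⁆ = 0 := by
    rw [← lie_skew, (LieModule.mem_maxTrivSubmodule ..).mp hb.basis_Z_mem_center, neg_zero]
  cases hb
  rcases u with _ | _ | _ | _ | i | i | ⟨j, k, h⟩ <;>
    rcases v with _ | _ | _ | _ | i' | i' | ⟨j', k', h'⟩ <;>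
    (try simp only [SIdx.S_eq_S_zero_one, ← sg_zero_one]) <;>
    first
    | simp [*]
    | rw [← lie_skew]; simp [*]

theorem Rmap_lie (x y : L) : Rmap b ⁅x, y⁆ = 0 := by
  have h : (LieAlgebra.ad ℂ L : L →ₗ[ℂ] Module.End ℂ L).compr₂ (Rmap b) = 0 :=
    LinearMap.ext_basis b b hb.Rmap_lie_basis
  simpa using LinearMap.congr_fun₂ h x y

theorem isHalfDeriv_Rmap : IsHalfDeriv (Rmap b) :=
  isHalfDeriv_of_mem_center_of_map_lie_eq_zero _ hb.Rmap_mem_center hb.Rmap_lie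

end IsSchrodinger

/-- The linear map `ℜ` on the Schrödinger algebra `S₂`
determined by `ℜ(s₁₂) = z` and `ℜ(u) = 0` for the other basis vectors is a
`1/2`-derivation of `S₂`, and it is not a scalar multiple of the identity. -/
theorem Rmap_is_nontrivial_half_derivation
    (L : Type*) [LieRing L] [LieAlgebra ℂ L]
    (b : Module.Basis (SIdx 2) ℂ L) (hb : IsSchrodinger b) :
    Rmap b (b (.S 0 1 (by decide))) = b .Z ∧
    (∀ u : SIdx 2, u ≠ .S 0 1 (by decide) → Rmap b (b u) = 0) ∧
    IsHalfDeriv (Rmap b) ∧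
    ¬ ∃ c : ℂ, Rmap b = c • LinearMap.id := by
  refine ⟨Rmap_basis b _, fun u hu => ?_, hb.isHalfDeriv_Rmap,
    (Rmap b).not_exists_eq_smul_id (w := b (.S 0 1 (by decide))) (b.ne_zero .E)
      (Rmap_basis b .E) (by simpa using b.ne_zero .Z)⟩
  cases u <;> simp_all [SIdx.S_eq_S_zero_one]
end
end

section
/- Let n ≥ 3 and let φ_0 be a 1/2-derivation of the Schrödinger algebra S_n which preserves the Z/2Z-grading, i.e. φ_0((S_n)_0) ⊆ (S_n)_0 and φ_0((S_n)_1) ⊆ (S_n)_1, where (S_n)_0 is the span of {e, f, h, z, s_{kl} (1 ≤ k < l ≤ n)} and (S_n)_1 is the span of {x_i, y_i (1 ≤ i ≤ n)}. Then φ_0 is trivial, i.e. φ_0 is a scalar multiple of the identity map. -/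
noncomputable section

open Submodule

variable {n : ℕ} {L : Type*} [LieRing L] [LieAlgebra ℂ L]

/-!
Subtracting `c • id`, where `c` is the `h`-coordinate of `φ h`, leaves a `1/2`-derivation `ψ`
with the same grading property; we show `ψ = 0`. Comparing coordinates in the images of the
`sl₂`-relations `[h,e] = 2e`, `[f,h] = 2f`, `[e,f] = h` gives `ψ e = ψ f = ψ h = 0`. Once
`ψ x = 0`, `ψ` maps `ad x`-eigenvectors of eigenvalue `μ` to eigenvectors of eigenvalue `2μ`;
as `ad h` acts on the odd part with eigenvalues `±1` only, `ψ` kills every `x_i` and `y_i`,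
and hence `z = [x_i, y_i]`. Then `ψ s_{jk}` commutes with `e`, `h` and all `x_i`, so it lies in
the centre `ℂ z`. Finally, for `n ≥ 3`, `s_{jk} = [s_{jm}, s_{mk}]` for a third index `m`, and a
`1/2`-derivation with central values vanishes on brackets.
-/

namespace IsHalfDeriv

variable {φ : L →ₗ[ℂ] L}

theorem sub_smul_id (hφ : IsHalfDeriv φ) (c : ℂ) : IsHalfDeriv (φ - c • LinearMap.id) := by
  intro x y
  simp only [LinearMap.sub_apply, LinearMap.smul_apply, LinearMap.id_apply, sub_lie, lie_sub,
    smul_lie, lie_smul, hφ x y]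
  module

theorem map_lie_of_map_left_eq_zero (hφ : IsHalfDeriv φ) {x : L} (hx : φ x = 0) (y : L) :
    φ ⁅x, y⁆ = (2⁻¹ : ℂ) • ⁅x, φ y⁆ := by
  rw [hφ, hx, zero_lie, zero_add]

theorem map_lie_of_map_right_eq_zero (hφ : IsHalfDeriv φ) {y : L} (hy : φ y = 0) (x : L) :
    φ ⁅x, y⁆ = (2⁻¹ : ℂ) • ⁅φ x, y⁆ := by
  rw [hφ, hy, lie_zero, add_zero]

theorem map_lie_eq_zero_of_map_eq_zero (hφ : IsHalfDeriv φ) {x y : L} (hx : φ x = 0)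
    (hy : φ y = 0) : φ ⁅x, y⁆ = 0 := by
  rw [hφ.map_lie_of_map_left_eq_zero hx, hy, lie_zero, smul_zero]

theorem lie_map_eq_smul_of_lie_eq_smul (hφ : IsHalfDeriv φ) {x y : L} (hx : φ x = 0) {μ : ℂ}
    (hxy : ⁅x, y⁆ = μ • y) : ⁅x, φ y⁆ = (2 * μ) • φ y := by
  have h := hφ.map_lie_of_map_left_eq_zero hx y
  rw [hxy, map_smul] at h
  linear_combination (norm := module) (-2 : ℂ) • h

theorem map_lie_eq_zero_of_mem_center (hφ : IsHalfDeriv φ) {x y : L}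
    (hx : φ x ∈ LieAlgebra.center ℂ L) (hy : φ y ∈ LieAlgebra.center ℂ L) : φ ⁅x, y⁆ = 0 := by
  rw [LieModule.mem_maxTrivSubmodule] at hx hy
  rw [hφ, ← lie_skew, hx, hy, neg_zero, zero_add, smul_zero]

end IsHalfDeriv

namespace IsSchrodinger

variable {b : Module.Basis (SIdx n) ℂ L}

theorem sg_of_lt (b : Module.Basis (SIdx n) ℂ L) {j k : Fin n} (h : j < k) :
    sg b j k = b (.S j k h) :=
  dif_pos h

theorem sg_self (b : Module.Basis (SIdx n) ℂ L) (j : Fin n) : sg b j j = 0 := by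
  simp [sg]

theorem sg_mem_span_evenSet (b : Module.Basis (SIdx n) ℂ L) (j k : Fin n) :
    sg b j k ∈ span ℂ (evenSet b) := by
  unfold sg
  split_ifs with h h'
  · exact subset_span (Or.inr (Or.inr (Or.inr (Or.inr ⟨j, k, h, rfl⟩))))
  · exact neg_mem (subset_span (Or.inr (Or.inr (Or.inr (Or.inr ⟨k, j, h', rfl⟩)))))
  · exact zero_mem _

theorem repr_X_eq_zero_of_mem_span_evenSet {v : L} (hv : v ∈ span ℂ (evenSet b)) (i : Fin n) :
    b.repr v (.X i) = 0 := by
  suffices span ℂ (evenSet b) ≤ LinearMap.ker (b.coord (.X i)) from this hv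
  rw [span_le]
  rintro _ (rfl | rfl | rfl | rfl | ⟨j, k, h, rfl⟩) <;> simp

theorem repr_Y_eq_zero_of_mem_span_evenSet {v : L} (hv : v ∈ span ℂ (evenSet b)) (i : Fin n) :
    b.repr v (.Y i) = 0 := by
  suffices span ℂ (evenSet b) ≤ LinearMap.ker (b.coord (.Y i)) from this hv
  rw [span_le]
  rintro _ (rfl | rfl | rfl | rfl | ⟨j, k, h, rfl⟩) <;> simp

theorem lie_S_X (hb : IsSchrodinger b) {j k : Fin n} (h : j < k) (i : Fin n) :
    ⁅b (.S j k h), b (.X i)⁆ = kd k i • b (.X j) - kd j i • b (.X k) := by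
  rw [← sg_of_lt b h]
  exact hb.lie_s_x j k i

theorem lie_sg_sg (hb : IsSchrodinger b) {j k m : Fin n} (hjm : j ≠ m) (hmk : m ≠ k) :
    ⁅sg b j m, sg b m k⁆ = sg b j k := by
  simp [hb.lie_s_s, kd, sg_self, hjm.symm, hmk.symm]

theorem lie_Z_left (hb : IsSchrodinger b) (v : L) : ⁅b .Z, v⁆ = 0 := by
  have : LieAlgebra.ad ℂ L (b .Z) = 0 := b.ext fun u => hb.lie_z u
  exact LinearMap.congr_fun this v

theorem lie_Z_right (hb : IsSchrodinger b) (v : L) : ⁅v, b .Z⁆ = 0 := by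
  rw [← lie_skew, hb.lie_Z_left, neg_zero]

theorem Z_mem_center (hb : IsSchrodinger b) : b .Z ∈ LieAlgebra.center ℂ L :=
  (LieModule.mem_maxTrivSubmodule ℂ L L _).2 hb.lie_Z_right

theorem lie_E_of_mem_span_evenSet (hb : IsSchrodinger b) {v : L}
    (hv : v ∈ span ℂ (evenSet b)) :
    ⁅b .E, v⁆ = b.repr v .F • b .H - (2 * b.repr v .H) • b .E := by
  induction hv using span_induction with
  | mem x hx =>
    rcases hx with rfl | rfl | rfl | rfl | ⟨j, k, h, rfl⟩
    · simp
    · simp [hb.lie_e_f]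
    · rw [← lie_skew, hb.lie_h_e]; simp
    · simp [hb.lie_Z_right]
    · rw [← sg_of_lt b h, hb.lie_e_s, sg_of_lt b h]; simp
  | zero => simp
  | add x y _ _ hx hy => simp only [lie_add, hx, hy, map_add, Finsupp.add_apply]; module
  | smul a x _ hx => simp only [lie_smul, hx, map_smul, Finsupp.smul_apply, smul_eq_mul]; module

theorem lie_F_of_mem_span_evenSet (hb : IsSchrodinger b) {v : L}
    (hv : v ∈ span ℂ (evenSet b)) :
    ⁅b .F, v⁆ = (2 * b.repr v .H) • b .F - b.repr v .E • b .H := by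
  induction hv using span_induction with
  | mem x hx =>
    rcases hx with rfl | rfl | rfl | rfl | ⟨j, k, h, rfl⟩
    · rw [← lie_skew, hb.lie_e_f]; simp
    · simp
    · simp [hb.lie_f_h]
    · simp [hb.lie_Z_right]
    · rw [← sg_of_lt b h, hb.lie_f_s, sg_of_lt b h]; simp
  | zero => simp
  | add x y _ _ hx hy => simp only [lie_add, hx, hy, map_add, Finsupp.add_apply]; module
  | smul a x _ hx => simp only [lie_smul, hx, map_smul, Finsupp.smul_apply, smul_eq_mul]; module

theorem lie_H_of_mem_span_evenSet (hb : IsSchrodinger b) {v : L}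
    (hv : v ∈ span ℂ (evenSet b)) :
    ⁅b .H, v⁆ = (2 * b.repr v .E) • b .E - (2 * b.repr v .F) • b .F := by
  induction hv using span_induction with
  | mem x hx =>
    rcases hx with rfl | rfl | rfl | rfl | ⟨j, k, h, rfl⟩
    · simp [hb.lie_h_e]
    · rw [← lie_skew, hb.lie_f_h]; simp
    · simp
    · simp [hb.lie_Z_right]
    · rw [← sg_of_lt b h, hb.lie_h_s, sg_of_lt b h]; simp
  | zero => simp
  | add x y _ _ hx hy => simp only [lie_add, hx, hy, map_add, Finsupp.add_apply]; module
  | smul a x _ hx => simp only [lie_smul, hx, map_smul, Finsupp.smul_apply, smul_eq_mul]; module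

theorem repr_lie_X_of_lt (hb : IsSchrodinger b) {v : L} (hv : v ∈ span ℂ (evenSet b))
    {j k : Fin n} (h : j < k) : b.repr ⁅v, b (.X k)⁆ (.X j) = b.repr v (.S j k h) := by
  induction hv using span_induction with
  | mem x hx =>
    rcases hx with rfl | rfl | rfl | rfl | ⟨a, d, had, rfl⟩
    · simp [hb.lie_e_x]
    · simp [hb.lie_f_x]
    · simp [hb.lie_h_x, h.ne']
    · simp [hb.lie_z]
    · classical
      rw [hb.lie_S_X had]
      simp only [kd, map_sub, map_smul, b.repr_self_apply, Finsupp.sub_apply, Finsupp.smul_apply,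
        SIdx.X.injEq, SIdx.S.injEq, smul_eq_mul]
      have hne : ¬(a = k ∧ d = j) := fun ⟨hak, hdj⟩ => lt_asymm h (hak ▸ hdj ▸ had)
      split_ifs <;> simp_all
  | zero => simp
  | add x y _ _ hx hy => simp only [add_lie, map_add, Finsupp.add_apply, hx, hy]
  | smul a x _ hx => simp only [smul_lie, map_smul, Finsupp.smul_apply, hx]

theorem eq_smul_Z_of_mem_span_evenSet (hb : IsSchrodinger b) {v : L}
    (hv : v ∈ span ℂ (evenSet b)) (hE : ⁅b .E, v⁆ = 0) (hH : ⁅b .H, v⁆ = 0)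
    (hX : ∀ i, ⁅v, b (.X i)⁆ = 0) : v = b.repr v .Z • b .Z := by
  rw [hb.lie_H_of_mem_span_evenSet hv] at hH
  rw [hb.lie_E_of_mem_span_evenSet hv] at hE
  have hvE : b.repr v .E = 0 := by simpa using congrArg (b.repr · .E) hH
  have hvF : b.repr v .F = 0 := by simpa using congrArg (b.repr · .F) hH
  have hvH : b.repr v .H = 0 := by simpa [hvF] using congrArg (b.repr · .E) hE
  refine b.ext_elem fun u => ?_
  cases u with
  | E => simpa using hvE
  | F => simpa using hvF
  | H => simpa using hvH
  | Z => simp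
  | X i => simpa using repr_X_eq_zero_of_mem_span_evenSet hv i
  | Y i => simpa using repr_Y_eq_zero_of_mem_span_evenSet hv i
  | S j k h => rw [← hb.repr_lie_X_of_lt hv h, hX k]; simp

theorem lie_H_lie_H_of_mem_span_oddSet (hb : IsSchrodinger b) {w : L}
    (hw : w ∈ span ℂ (oddSet b)) : ⁅b .H, ⁅b .H, w⁆⁆ = w := by
  induction hw using span_induction with
  | mem x hx => obtain ⟨i, rfl | rfl⟩ := hx <;> simp [hb.lie_h_x, hb.lie_h_y]
  | zero => simp
  | add x y _ _ hx hy => rw [lie_add, lie_add, hx, hy]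
  | smul a x _ hx => rw [lie_smul, lie_smul, hx]

theorem eq_zero_of_lie_H_eq_smul (hb : IsSchrodinger b) {w : L} (hw : w ∈ span ℂ (oddSet b))
    {μ : ℂ} (hμ : ⁅b .H, w⁆ = μ • w) (hμ1 : μ ^ 2 ≠ 1) : w = 0 := by
  have h := hb.lie_H_lie_H_of_mem_span_oddSet hw
  rw [hμ, lie_smul, hμ, smul_smul] at h
  have h' : (μ ^ 2 - 1) • w = 0 := by linear_combination (norm := module) h
  exact (smul_eq_zero.1 h').resolve_left (sub_ne_zero.2 hμ1)

theorem map_E_eq_smul_H (hb : IsSchrodinger b) {ψ : L →ₗ[ℂ] L} (hψ : IsHalfDeriv ψ)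
    (heven : ∀ x ∈ span ℂ (evenSet b), ψ x ∈ span ℂ (evenSet b))
    (hH : b.repr (ψ (b .H)) .H = 0) :
    ψ (b .E) = (-4⁻¹ * b.repr (ψ (b .H)) .F) • b .H := by
  have he := heven _ (subset_span (Or.inl rfl) : b .E ∈ _)
  have hh := heven _ (subset_span (Or.inr (Or.inr (Or.inl rfl))) : b .H ∈ _)
  have h := hψ (b .H) (b .E)
  rw [hb.lie_h_e, map_smul, ← lie_skew (ψ (b .H)), hb.lie_E_of_mem_span_evenSet hh,
    hb.lie_H_of_mem_span_evenSet he, hH] at h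
  have hE : 2 * b.repr (ψ (b .E)) .E = b.repr (ψ (b .E)) .E := by
    simpa using congrArg (b.repr · .E) h
  have hF : 2 * b.repr (ψ (b .E)) .F = -b.repr (ψ (b .E)) .F := by
    simpa using congrArg (b.repr · .F) h
  have hE0 : b.repr (ψ (b .E)) .E = 0 := by linear_combination hE
  have hF0 : b.repr (ψ (b .E)) .F = 0 := by linear_combination hF / 3
  rw [hE0, hF0] at h
  linear_combination (norm := module) (2⁻¹ : ℂ) • h

theorem map_F_eq_smul_H (hb : IsSchrodinger b) {ψ : L →ₗ[ℂ] L} (hψ : IsHalfDeriv ψ)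
    (heven : ∀ x ∈ span ℂ (evenSet b), ψ x ∈ span ℂ (evenSet b))
    (hH : b.repr (ψ (b .H)) .H = 0) :
    ψ (b .F) = (-4⁻¹ * b.repr (ψ (b .H)) .E) • b .H := by
  have hf := heven _ (subset_span (Or.inr (Or.inl rfl)) : b .F ∈ _)
  have hh := heven _ (subset_span (Or.inr (Or.inr (Or.inl rfl))) : b .H ∈ _)
  have h := hψ (b .F) (b .H)
  rw [hb.lie_f_h, map_smul, ← lie_skew (ψ (b .F)), hb.lie_H_of_mem_span_evenSet hf,
    hb.lie_F_of_mem_span_evenSet hh, hH] at h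
  have hE : 2 * b.repr (ψ (b .F)) .E = -b.repr (ψ (b .F)) .E := by
    simpa using congrArg (b.repr · .E) h
  have hF : 2 * b.repr (ψ (b .F)) .F = b.repr (ψ (b .F)) .F := by
    simpa using congrArg (b.repr · .F) h
  have hE0 : b.repr (ψ (b .F)) .E = 0 := by linear_combination hE / 3
  have hF0 : b.repr (ψ (b .F)) .F = 0 := by linear_combination hF
  rw [hE0, hF0] at h
  linear_combination (norm := module) (2⁻¹ : ℂ) • h

theorem map_E_F_H_eq_zero (hb : IsSchrodinger b) {ψ : L →ₗ[ℂ] L} (hψ : IsHalfDeriv ψ)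
    (heven : ∀ x ∈ span ℂ (evenSet b), ψ x ∈ span ℂ (evenSet b))
    (hH : b.repr (ψ (b .H)) .H = 0) :
    ψ (b .E) = 0 ∧ ψ (b .F) = 0 ∧ ψ (b .H) = 0 := by
  have hψe := hb.map_E_eq_smul_H hψ heven hH
  have hψf := hb.map_F_eq_smul_H hψ heven hH
  have h := hψ (b .E) (b .F)
  rw [hb.lie_e_f, hψe, hψf, smul_lie, lie_smul, ← lie_skew (b .H), hb.lie_f_h,
    ← lie_skew (b .E), hb.lie_h_e] at h
  have hE : b.repr (ψ (b .H)) .E = 2⁻¹ * (4⁻¹ * b.repr (ψ (b .H)) .E * 2) := by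
    simpa using congrArg (b.repr · .E) h
  have hF : b.repr (ψ (b .H)) .F = 2⁻¹ * (4⁻¹ * b.repr (ψ (b .H)) .F * 2) := by
    simpa using congrArg (b.repr · .F) h
  have hE0 : b.repr (ψ (b .H)) .E = 0 := by linear_combination (4 / 3 : ℂ) * hE
  have hF0 : b.repr (ψ (b .H)) .F = 0 := by linear_combination (4 / 3 : ℂ) * hF
  rw [hE0, hF0] at h
  rw [hF0] at hψe
  rw [hE0] at hψf
  exact ⟨by simpa using hψe, by simpa using hψf, by simpa using h⟩

theorem map_X_eq_zero (hb : IsSchrodinger b) {ψ : L →ₗ[ℂ] L} (hψ : IsHalfDeriv ψ)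
    (hodd : ∀ x ∈ span ℂ (oddSet b), ψ x ∈ span ℂ (oddSet b)) (hH : ψ (b .H) = 0) (i : Fin n) :
    ψ (b (.X i)) = 0 :=
  hb.eq_zero_of_lie_H_eq_smul (hodd _ (subset_span ⟨i, .inl rfl⟩))
    (hψ.lie_map_eq_smul_of_lie_eq_smul hH (μ := 1) (by rw [hb.lie_h_x, one_smul])) (by norm_num)

theorem map_Y_eq_zero (hb : IsSchrodinger b) {ψ : L →ₗ[ℂ] L} (hψ : IsHalfDeriv ψ)
    (hodd : ∀ x ∈ span ℂ (oddSet b), ψ x ∈ span ℂ (oddSet b)) (hH : ψ (b .H) = 0) (i : Fin n) :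
    ψ (b (.Y i)) = 0 :=
  hb.eq_zero_of_lie_H_eq_smul (hodd _ (subset_span ⟨i, .inr rfl⟩))
    (hψ.lie_map_eq_smul_of_lie_eq_smul hH (μ := -1) (by rw [hb.lie_h_y, neg_one_smul]))
    (by norm_num)

theorem map_Z_eq_zero (hb : IsSchrodinger b) {ψ : L →ₗ[ℂ] L} (hψ : IsHalfDeriv ψ) {i : Fin n}
    (hX : ψ (b (.X i)) = 0) (hY : ψ (b (.Y i)) = 0) : ψ (b .Z) = 0 := by
  simpa [hb.lie_x_y, kd] using hψ.map_lie_eq_zero_of_map_eq_zero hX hY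

theorem map_sg_mem_center (hb : IsSchrodinger b) {ψ : L →ₗ[ℂ] L} (hψ : IsHalfDeriv ψ)
    (heven : ∀ x ∈ span ℂ (evenSet b), ψ x ∈ span ℂ (evenSet b)) (hE : ψ (b .E) = 0)
    (hH : ψ (b .H) = 0) (hX : ∀ i, ψ (b (.X i)) = 0) (j k : Fin n) :
    ψ (sg b j k) ∈ LieAlgebra.center ℂ L := by
  have hlieE : ⁅b .E, ψ (sg b j k)⁆ = 0 := by
    simpa using hψ.lie_map_eq_smul_of_lie_eq_smul hE (μ := 0) (by simpa using hb.lie_e_s j k)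
  have hlieH : ⁅b .H, ψ (sg b j k)⁆ = 0 := by
    simpa using hψ.lie_map_eq_smul_of_lie_eq_smul hH (μ := 0) (by simpa using hb.lie_h_s j k)
  have hlieX (i : Fin n) : ⁅ψ (sg b j k), b (.X i)⁆ = 0 := by
    have h := hψ.map_lie_of_map_right_eq_zero (hX i) (sg b j k)
    simp only [hb.lie_s_x, map_sub, map_smul, hX, smul_zero, sub_zero] at h
    exact (smul_eq_zero.1 h.symm).resolve_left (by norm_num)
  rw [hb.eq_smul_Z_of_mem_span_evenSet (heven _ (sg_mem_span_evenSet b j k)) hlieE hlieH hlieX]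
  exact (LieAlgebra.center ℂ L).smul_mem _ hb.Z_mem_center

theorem map_sg_eq_zero (hb : IsSchrodinger b) (hn : 3 ≤ n) {ψ : L →ₗ[ℂ] L}
    (hψ : IsHalfDeriv ψ) (hcenter : ∀ j k, ψ (sg b j k) ∈ LieAlgebra.center ℂ L) (j k : Fin n) :
    ψ (sg b j k) = 0 := by
  obtain ⟨m, hmj, hmk⟩ := Fin.exists_ne_and_ne_of_two_lt j k (by omega)
  rw [← hb.lie_sg_sg hmj.symm hmk]
  exact hψ.map_lie_eq_zero_of_mem_center (hcenter j m) (hcenter m k)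

end IsSchrodinger

/-- For `n ≥ 3`, every `1/2`-derivation of the Schrödinger
algebra `S_n` preserving the `ℤ/2ℤ`-grading is trivial, i.e. a scalar multiple
of the identity map. -/
theorem even_half_derivation_is_trivial (n : ℕ) (hn : 3 ≤ n)
    (L : Type*) [LieRing L] [LieAlgebra ℂ L]
    (b : Module.Basis (SIdx n) ℂ L) (hb : IsSchrodinger b)
    (φ : L →ₗ[ℂ] L) (hφ : IsHalfDeriv φ)
    (heven : ∀ x ∈ span ℂ (evenSet b), φ x ∈ span ℂ (evenSet b))
    (hodd : ∀ x ∈ span ℂ (oddSet b), φ x ∈ span ℂ (oddSet b)) :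
    ∃ c : ℂ, φ = c • LinearMap.id := by
  set c := b.repr (φ (b .H)) .H
  set ψ := φ - c • LinearMap.id
  have hψ : IsHalfDeriv ψ := hφ.sub_smul_id c
  have hψeven (x) (hx : x ∈ span ℂ (evenSet b)) : ψ x ∈ span ℂ (evenSet b) :=
    sub_mem (heven x hx) (smul_mem _ c hx)
  have hψodd (x) (hx : x ∈ span ℂ (oddSet b)) : ψ x ∈ span ℂ (oddSet b) :=
    sub_mem (hodd x hx) (smul_mem _ c hx)
  obtain ⟨hE, hF, hH⟩ := hb.map_E_F_H_eq_zero hψ hψeven (by simp [ψ, c])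
  have hX := hb.map_X_eq_zero hψ hψodd hH
  have hY := hb.map_Y_eq_zero hψ hψodd hH
  have hS := hb.map_sg_eq_zero hn hψ (hb.map_sg_mem_center hψ hψeven hE hH hX)
  suffices ψ = 0 from ⟨c, sub_eq_zero.1 this⟩
  refine b.ext fun u => ?_
  cases u with
  | E => exact hE
  | F => exact hF
  | H => exact hH
  | Z => exact hb.map_Z_eq_zero hψ (hX ⟨0, by omega⟩) (hY _)
  | X i => exact hX i
  | Y i => exact hY i
  | S j k h => rw [← IsSchrodinger.sg_of_lt b h]; exact hS j k
end
end

section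
/- Let n ≥ 3 and let φ_1 be a 1/2-derivation of the Schrödinger algebra S_n which reverses the Z/2Z-grading, i.e. φ_1((S_n)_0) ⊆ (S_n)_1 and φ_1((S_n)_1) ⊆ (S_n)_0, where (S_n)_0 is the span of {e, f, h, z, s_{kl} (1 ≤ k < l ≤ n)} and (S_n)_1 is the span of {x_i, y_i (1 ≤ i ≤ n)}. Then φ_1 = 0. -/
noncomputable section

open Submodule

variable {n : ℕ} {L : Type*} [LieRing L] [LieAlgebra ℂ L]

/-!
Since `ad h` is diagonal in the basis, with weight `±2` on `e, f`, `0` on `h, z, s_{jk}` and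
`±1` on `x_i, y_i`, one controls `φ` through the `h`-weights of its values. Read in the
coordinates `x_i, y_i`, the half-derivation identities for `[h,e]`, `[f,h]` and `[e,f]` form a
linear system forcing the odd vector `φ h` to vanish. Once `φ h = 0`, the identity for `[h,u]`
turns `[h,u] = c u` into `[h, φ u] = 2c φ u`. This doubling of weights kills `φ e` and `φ f`
(weight `±4` does not occur) as well as `φ z` and `φ s_{jk}` (odd vectors have no weight `0`),
and leaves only the `e`-coordinate of `φ x_i`, which vanishes because `φ y_i = ½ [f, φ x_i]`
has weight `-2`, hence no `h`-coordinate. Then `φ y_i = ½ [f, φ x_i] = 0`.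
-/

namespace SIdx

def IsOdd : SIdx n → Prop
  | X _ | Y _ => True
  | _ => False

def weight : SIdx n → ℂ
  | E => 2
  | F => -2
  | H | Z | S _ _ _ => 0
  | X _ => 1
  | Y _ => -1

end SIdx

variable {b : Module.Basis (SIdx n) ℂ L}

theorem evenSet_eq_image (b : Module.Basis (SIdx n) ℂ L) :
    evenSet b = b '' {u | ¬ u.IsOdd} := by
  ext v
  constructor
  · rintro (rfl | rfl | rfl | rfl | ⟨j, k, h, rfl⟩) <;>
      exact Set.mem_image_of_mem _ (by simp [SIdx.IsOdd])
  · rintro ⟨u, hu, rfl⟩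
    cases u with
    | X | Y => exact absurd trivial hu
    | S j k h => exact .inr <| .inr <| .inr <| .inr ⟨j, k, h, rfl⟩
    | _ => simp [evenSet]

theorem oddSet_eq_image (b : Module.Basis (SIdx n) ℂ L) :
    oddSet b = b '' {u | u.IsOdd} := by
  ext v
  constructor
  · rintro ⟨i, rfl | rfl⟩ <;> exact Set.mem_image_of_mem _ trivial
  · rintro ⟨u, hu, rfl⟩
    cases u with
    | X i => exact ⟨i, .inl rfl⟩
    | Y i => exact ⟨i, .inr rfl⟩
    | _ => exact hu.elim

theorem repr_eq_zero_of_mem_span_evenSet {w : L} (hw : w ∈ span ℂ (evenSet b)) {u : SIdx n}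
    (hu : u.IsOdd) : b.repr w u = 0 := by
  rw [evenSet_eq_image, b.mem_span_image] at hw
  by_contra h
  exact hw (Finsupp.mem_support_iff.mpr h) hu

theorem repr_eq_zero_of_mem_span_oddSet {w : L} (hw : w ∈ span ℂ (oddSet b)) {u : SIdx n}
    (hu : ¬ u.IsOdd) : b.repr w u = 0 := by
  rw [oddSet_eq_image, b.mem_span_image] at hw
  by_contra h
  exact hu (hw (Finsupp.mem_support_iff.mpr h))

theorem repr_lie_eq_of_basis (a : L) (u : SIdx n) {g : L →ₗ[ℂ] ℂ}
    (h : ∀ v, b.repr ⁅a, b v⁆ u = g (b v)) (w : L) : b.repr ⁅a, w⁆ u = g w :=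
  LinearMap.congr_fun
    (b.ext (f₁ := Finsupp.lapply u ∘ₗ b.repr.toLinearMap ∘ₗ LieModule.toEnd ℂ L L a) h) w

theorem sg_of_lt (b : Module.Basis (SIdx n) ℂ L) {j k : Fin n} (h : j < k) :
    sg b j k = b (.S j k h) :=
  dif_pos h

namespace IsSchrodinger

theorem lie_h_f (hb : IsSchrodinger b) : ⁅b .H, b .F⁆ = (-2 : ℂ) • b .F := by
  rw [← lie_skew, hb.lie_f_h, neg_smul]

theorem lie_e_h (hb : IsSchrodinger b) : ⁅b .E, b .H⁆ = -((2 : ℂ) • b .E) := by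
  rw [← lie_skew, hb.lie_h_e]

theorem lie_f_e (hb : IsSchrodinger b) : ⁅b .F, b .E⁆ = -b .H := by
  rw [← lie_skew, hb.lie_e_f]

theorem lie_basis_z (hb : IsSchrodinger b) (u : SIdx n) : ⁅b u, b .Z⁆ = 0 := by
  rw [← lie_skew, hb.lie_z, neg_zero]

theorem lie_h_S (hb : IsSchrodinger b) {j k : Fin n} (h : j < k) :
    ⁅b .H, b (.S j k h)⁆ = 0 := by
  rw [← sg_of_lt b h, hb.lie_h_s]

theorem lie_e_S (hb : IsSchrodinger b) {j k : Fin n} (h : j < k) :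
    ⁅b .E, b (.S j k h)⁆ = 0 := by
  rw [← sg_of_lt b h, hb.lie_e_s]

theorem lie_f_S (hb : IsSchrodinger b) {j k : Fin n} (h : j < k) :
    ⁅b .F, b (.S j k h)⁆ = 0 := by
  rw [← sg_of_lt b h, hb.lie_f_s]

theorem repr_lie_h (hb : IsSchrodinger b) (w : L) (u : SIdx n) :
    b.repr ⁅b .H, w⁆ u = u.weight * b.repr w u := by
  refine repr_lie_eq_of_basis (g := u.weight • (Finsupp.lapply u ∘ₗ b.repr.toLinearMap))
    _ _ (fun v => ?_) w
  cases v with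
  | S j k h => cases u <;> simp [hb.lie_h_S h, SIdx.weight]
  | _ => cases u <;> simp [hb.lie_h_e, hb.lie_h_f, hb.lie_basis_z, hb.lie_h_x, hb.lie_h_y,
      SIdx.weight]

theorem repr_lie_e_X (hb : IsSchrodinger b) (w : L) (i : Fin n) :
    b.repr ⁅b .E, w⁆ (.X i) = b.repr w (.Y i) := by
  refine repr_lie_eq_of_basis (g := Finsupp.lapply (.Y i) ∘ₗ b.repr.toLinearMap)
    _ _ (fun v => ?_) w
  classical
  cases v <;> simp [hb.lie_e_f, hb.lie_e_h, hb.lie_basis_z, hb.lie_e_x, hb.lie_e_y, hb.lie_e_S,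
    Finsupp.single_apply]

theorem repr_lie_e_Y (hb : IsSchrodinger b) (w : L) (i : Fin n) :
    b.repr ⁅b .E, w⁆ (.Y i) = 0 := by
  refine repr_lie_eq_of_basis (g := 0) _ _ (fun v => ?_) w
  cases v <;> simp [hb.lie_e_f, hb.lie_e_h, hb.lie_basis_z, hb.lie_e_x, hb.lie_e_y, hb.lie_e_S]

theorem repr_lie_f_X (hb : IsSchrodinger b) (w : L) (i : Fin n) :
    b.repr ⁅b .F, w⁆ (.X i) = 0 := by
  refine repr_lie_eq_of_basis (g := 0) _ _ (fun v => ?_) w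
  cases v <;> simp [hb.lie_f_e, hb.lie_f_h, hb.lie_basis_z, hb.lie_f_x, hb.lie_f_y, hb.lie_f_S]

theorem repr_lie_f_Y (hb : IsSchrodinger b) (w : L) (i : Fin n) :
    b.repr ⁅b .F, w⁆ (.Y i) = b.repr w (.X i) := by
  refine repr_lie_eq_of_basis (g := Finsupp.lapply (.X i) ∘ₗ b.repr.toLinearMap)
    _ _ (fun v => ?_) w
  classical
  cases v <;> simp [hb.lie_f_e, hb.lie_f_h, hb.lie_basis_z, hb.lie_f_x, hb.lie_f_y, hb.lie_f_S,
    Finsupp.single_apply]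

theorem repr_lie_f_H (hb : IsSchrodinger b) (w : L) :
    b.repr ⁅b .F, w⁆ .H = -b.repr w .E := by
  refine repr_lie_eq_of_basis (g := -(Finsupp.lapply .E ∘ₗ b.repr.toLinearMap))
    _ _ (fun v => ?_) w
  cases v <;> simp [hb.lie_f_e, hb.lie_f_h, hb.lie_basis_z, hb.lie_f_x, hb.lie_f_y, hb.lie_f_S]

theorem repr_eq_zero_of_lie_h_eq_smul (hb : IsSchrodinger b) {w : L} {c : ℂ}
    (h : ⁅b .H, w⁆ = c • w) {u : SIdx n} (hu : u.weight ≠ c) : b.repr w u = 0 := by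
  have hu' := congr_arg (b.repr · u) h
  simp only [hb.repr_lie_h, map_smul, Finsupp.smul_apply, smul_eq_mul] at hu'
  have h0 : (u.weight - c) * b.repr w u = 0 := by linear_combination hu'
  exact (mul_eq_zero.mp h0).resolve_left (sub_ne_zero.mpr hu)

theorem eq_zero_of_lie_h_eq_smul (hb : IsSchrodinger b) {w : L} {c : ℂ}
    (h : ⁅b .H, w⁆ = c • w) (hw : ∀ u : SIdx n, u.weight = c → b.repr w u = 0) : w = 0 :=
  b.ext_elem fun u => by
    rw [map_zero, Finsupp.zero_apply]
    by_cases hu : u.weight = c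
    · exact hw u hu
    · exact hb.repr_eq_zero_of_lie_h_eq_smul h hu

end IsSchrodinger

theorem eq_zero_of_mem_span_oddSet {w : L} (hw : w ∈ span ℂ (oddSet b))
    (hX : ∀ i, b.repr w (.X i) = 0) (hY : ∀ i, b.repr w (.Y i) = 0) : w = 0 :=
  b.ext_elem fun u => by
    rw [map_zero, Finsupp.zero_apply]
    cases u with
    | X i => exact hX i
    | Y i => exact hY i
    | _ => exact repr_eq_zero_of_mem_span_oddSet hw id

namespace IsHalfDeriv

variable {φ : L →ₗ[ℂ] L}

theorem map_lie_of_map_eq_zero (hφ : IsHalfDeriv φ) {a : L} (ha : φ a = 0) (u : L) :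
    φ ⁅a, u⁆ = (2⁻¹ : ℂ) • ⁅a, φ u⁆ := by
  rw [hφ, ha, zero_lie, zero_add]

theorem lie_map_eq_smul (hφ : IsHalfDeriv φ) {a u : L} {c : ℂ} (ha : φ a = 0)
    (hu : ⁅a, u⁆ = c • u) : ⁅a, φ u⁆ = (2 * c) • φ u := by
  have h := hφ.map_lie_of_map_eq_zero ha u
  rw [hu, map_smul] at h
  rw [mul_smul, h, smul_smul]
  norm_num

end IsHalfDeriv

variable {φ : L →ₗ[ℂ] L}

theorem map_h_eq_zero (hb : IsSchrodinger b) (hφ : IsHalfDeriv φ)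
    (hH : φ (b .H) ∈ span ℂ (oddSet b)) : φ (b .H) = 0 := by
  have hcoord : ∀ i, b.repr (φ (b .H)) (.X i) = 0 ∧ b.repr (φ (b .H)) (.Y i) = 0 := by
    intro i
    have he := congr_arg (b.repr · (.X i)) (hφ (b .H) (b .E))
    have hf := congr_arg (b.repr · (.Y i)) (hφ (b .F) (b .H))
    have hhX := congr_arg (b.repr · (.X i)) (hφ (b .E) (b .F))
    have hhY := congr_arg (b.repr · (.Y i)) (hφ (b .E) (b .F))
    rw [hb.lie_h_e, ← lie_skew (φ (b .H))] at he
    rw [hb.lie_f_h, ← lie_skew (φ (b .F))] at hf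
    rw [hb.lie_e_f, ← lie_skew (φ (b .E))] at hhX hhY
    simp only [map_smul, map_add, map_neg, Finsupp.smul_apply, Finsupp.add_apply,
      Finsupp.neg_apply, smul_eq_mul, hb.repr_lie_h, hb.repr_lie_e_X, hb.repr_lie_e_Y,
      hb.repr_lie_f_X, hb.repr_lie_f_Y, SIdx.weight] at he hf hhX hhY
    constructor
    · linear_combination (2 / 5 : ℂ) * hf + (6 / 5 : ℂ) * hhX
    · linear_combination (-2 / 5 : ℂ) * he + (6 / 5 : ℂ) * hhY
  exact eq_zero_of_mem_span_oddSet hH (fun i => (hcoord i).1) (fun i => (hcoord i).2)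

theorem map_eq_zero_of_lie_h_eq_zero (hb : IsSchrodinger b) (hφ : IsHalfDeriv φ)
    (hH : φ (b .H) = 0) {u : L} (hu : ⁅b .H, u⁆ = 0) (hφu : φ u ∈ span ℂ (oddSet b)) :
    φ u = 0 := by
  refine hb.eq_zero_of_lie_h_eq_smul (c := 0) ?_ fun v hv => ?_
  · rw [hφ.lie_map_eq_smul hH (c := 0) (by rw [hu, zero_smul]), mul_zero]
  · refine repr_eq_zero_of_mem_span_oddSet hφu ?_
    cases v <;> simp_all [SIdx.weight, SIdx.IsOdd]

theorem map_x_eq_zero (hb : IsSchrodinger b) (hφ : IsHalfDeriv φ) (hH : φ (b .H) = 0)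
    (hF : φ (b .F) = 0) {i : Fin n} (hX : φ (b (.X i)) ∈ span ℂ (evenSet b)) :
    φ (b (.X i)) = 0 := by
  have hY : φ (b (.Y i)) = (2⁻¹ : ℂ) • ⁅b .F, φ (b (.X i))⁆ := by
    rw [← hφ.map_lie_of_map_eq_zero hF, hb.lie_f_x]
  have hYH : b.repr (φ (b (.Y i))) .H = 0 :=
    hb.repr_eq_zero_of_lie_h_eq_smul
      (hφ.lie_map_eq_smul hH (c := -1) (by rw [hb.lie_h_y, neg_one_smul]))
      (by norm_num [SIdx.weight])
  have hXE : b.repr (φ (b (.X i))) .E = 0 := by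
    have h := congr_arg (b.repr · .H) hY
    simp only [hYH, map_smul, Finsupp.smul_apply, smul_eq_mul, hb.repr_lie_f_H] at h
    linear_combination 2 * h
  refine hb.eq_zero_of_lie_h_eq_smul
    (hφ.lie_map_eq_smul hH (c := 1) (by rw [hb.lie_h_x, one_smul])) fun u hu => ?_
  cases u with
  | E => exact hXE
  | X j => exact repr_eq_zero_of_mem_span_evenSet hX trivial
  | _ => norm_num [SIdx.weight] at hu

theorem odd_half_derivation_is_zero_general (n : ℕ)
    (L : Type*) [LieRing L] [LieAlgebra ℂ L]
    (b : Module.Basis (SIdx n) ℂ L) (hb : IsSchrodinger b)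
    (φ : L →ₗ[ℂ] L) (hφ : IsHalfDeriv φ)
    (heven : ∀ x ∈ span ℂ (evenSet b), φ x ∈ span ℂ (oddSet b))
    (hodd : ∀ x ∈ span ℂ (oddSet b), φ x ∈ span ℂ (evenSet b)) :
    φ = 0 := by
  have hev {u : SIdx n} (hu : ¬ u.IsOdd) : φ (b u) ∈ span ℂ (oddSet b) :=
    heven _ (subset_span (evenSet_eq_image b ▸ Set.mem_image_of_mem b hu))
  have hod {u : SIdx n} (hu : u.IsOdd) : φ (b u) ∈ span ℂ (evenSet b) :=
    hodd _ (subset_span (oddSet_eq_image b ▸ Set.mem_image_of_mem b hu))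
  have hH : φ (b .H) = 0 := map_h_eq_zero hb hφ (hev id)
  have hE : φ (b .E) = 0 := hb.eq_zero_of_lie_h_eq_smul (hφ.lie_map_eq_smul hH hb.lie_h_e)
    fun u hu => by cases u <;> norm_num [SIdx.weight] at hu
  have hF : φ (b .F) = 0 := hb.eq_zero_of_lie_h_eq_smul (hφ.lie_map_eq_smul hH hb.lie_h_f)
    fun u hu => by cases u <;> norm_num [SIdx.weight] at hu
  have hX (i : Fin n) : φ (b (.X i)) = 0 := map_x_eq_zero hb hφ hH hF (hod trivial)
  refine b.ext fun u => ?_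
  cases u with
  | E => exact hE
  | F => exact hF
  | H => exact hH
  | Z => exact map_eq_zero_of_lie_h_eq_zero hb hφ hH (hb.lie_basis_z _) (hev id)
  | S j k h => exact map_eq_zero_of_lie_h_eq_zero hb hφ hH (hb.lie_h_S h) (hev id)
  | X i => exact hX i
  | Y i =>
    rw [LinearMap.zero_apply, ← hb.lie_f_x, hφ.map_lie_of_map_eq_zero hF, hX, lie_zero, smul_zero]

/-- For `n ≥ 3`, every `1/2`-derivation of the Schrödinger
algebra `S_n` reversing the `ℤ/2ℤ`-grading is zero. -/
theorem odd_half_derivation_is_zero (n : ℕ) (hn : 3 ≤ n)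
    (L : Type*) [LieRing L] [LieAlgebra ℂ L]
    (b : Module.Basis (SIdx n) ℂ L) (hb : IsSchrodinger b)
    (φ : L →ₗ[ℂ] L) (hφ : IsHalfDeriv φ)
    (heven : ∀ x ∈ span ℂ (evenSet b), φ x ∈ span ℂ (oddSet b))
    (hodd : ∀ x ∈ span ℂ (oddSet b), φ x ∈ span ℂ (evenSet b)) :
    φ = 0 :=
  odd_half_derivation_is_zero_general n L b hb φ hφ heven hodd
end
end

section
/- The Schrödinger algebra S_2 admits a non-trivial Hom-Lie structure: the linear map ℜ on S_2 determined by ℜ(s_{12}) = z and ℜ vanishing on the other basis elements is not a scalar multiple of the identity map and satisfies the Hom-Jacobi identity [ℜ(x), [y, w]] + [ℜ(y), [w, x]] + [ℜ(w), [x, y]] = 0 for all x, y, w ∈ S_2. -/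
noncomputable section

open Submodule

variable {n : ℕ} {L : Type*} [LieRing L] [LieAlgebra ℂ L]

/-! `ℜ` takes values in `span {z}`, which is central, so every term of the
Hom-Jacobi identity is a bracket with a central element and vanishes. `ℜ` is not a scalar
because it kills `e` but not `s₁₂`. -/

theorem LieAlgebra.hom_jacobi_of_mem_center {R M : Type*} [CommRing R] [LieRing M]
    [LieAlgebra R M] (φ : M →ₗ[R] M) (hφ : ∀ x, φ x ∈ LieAlgebra.center R M) (x y w : M) :
    ⁅φ x, ⁅y, w⁆⁆ + ⁅φ y, ⁅w, x⁆⁆ + ⁅φ w, ⁅x, y⁆⁆ = 0 := by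
  have lie_eq_zero (u v : M) : ⁅φ u, v⁆ = 0 := by
    rw [← lie_skew, (LieModule.mem_maxTrivSubmodule R M M _).mp (hφ u), neg_zero]
  simp only [lie_eq_zero, add_zero]

theorem Module.Basis.mem_center_of_lie_basis_eq_zero {ι R M : Type*} [CommRing R] [LieRing M]
    [LieAlgebra R M] (b : Module.Basis ι R M) {z : M} (hz : ∀ i, ⁅z, b i⁆ = 0) :
    z ∈ LieAlgebra.center R M := by
  have ad_eq_zero : LieAlgebra.ad R M z = 0 := b.ext fun i => hz i
  refine (LieModule.mem_maxTrivSubmodule R M M z).mpr fun y => ?_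
  rw [← lie_skew, ← LieAlgebra.ad_apply R, ad_eq_zero, LinearMap.zero_apply, neg_zero]

theorem LinearMap.not_exists_eq_smul_id_of_apply_eq_zero {K V : Type*} [Field K]
    [AddCommGroup V] [Module K V] {f : V →ₗ[K] V} (hf : f ≠ 0) {v : V} (hv : v ≠ 0)
    (hfv : f v = 0) : ¬ ∃ c : K, f = c • LinearMap.id := by
  rintro ⟨c, rfl⟩
  have hc : c = 0 := by simpa [hv] using hfv
  exact hf (by simp [hc])

theorem Rmap_basis_S (b : Module.Basis (SIdx n) ℂ L) (j k : Fin n) (h : j < k) :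
    Rmap b (b (.S j k h)) = b .Z := by
  simp [Rmap]

theorem Rmap_basis_E (b : Module.Basis (SIdx n) ℂ L) : Rmap b (b .E) = 0 := by
  simp [Rmap]

theorem IsSchrodinger.basis_Z_mem_center_s16 {b : Module.Basis (SIdx n) ℂ L} (hb : IsSchrodinger b) :
    b .Z ∈ LieAlgebra.center ℂ L :=
  b.mem_center_of_lie_basis_eq_zero hb.lie_z

theorem IsSchrodinger.Rmap_apply_mem_center {b : Module.Basis (SIdx n) ℂ L}
    (hb : IsSchrodinger b) (x : L) : Rmap b x ∈ LieAlgebra.center ℂ L := by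
  have range_le : LinearMap.range (Rmap b) ≤ (LieAlgebra.center ℂ L).toSubmodule := by
    rw [Rmap, Module.Basis.constr_range, Submodule.span_le]
    rintro _ ⟨u, rfl⟩
    cases u <;> simp [hb.basis_Z_mem_center_s16]
  exact range_le (LinearMap.mem_range_self _ x)

/-- The Schrödinger algebra `S₂` admits a non-trivial
Hom-Lie structure: the map `ℜ` (with `ℜ(s₁₂) = z` and `ℜ` vanishing on the
other basis vectors) is not a scalar multiple of the identity and satisfies the
Hom-Jacobi identity. -/
theorem S2_admits_nontrivial_HomLie_structure
    (L : Type*) [LieRing L] [LieAlgebra ℂ L]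
    (b : Module.Basis (SIdx 2) ℂ L) (hb : IsSchrodinger b) :
    (¬ ∃ c : ℂ, Rmap b = c • LinearMap.id) ∧
    (∀ x y w : L,
      ⁅Rmap b x, ⁅y, w⁆⁆ + ⁅Rmap b y, ⁅w, x⁆⁆ + ⁅Rmap b w, ⁅x, y⁆⁆ = 0) := by
  have Rmap_ne_zero : Rmap b ≠ 0 := fun h => b.ne_zero .Z <| by
    simpa [h] using (Rmap_basis_S b 0 1 Fin.zero_lt_one).symm
  exact ⟨LinearMap.not_exists_eq_smul_id_of_apply_eq_zero Rmap_ne_zero (b.ne_zero .E)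
      (Rmap_basis_E b),
    LieAlgebra.hom_jacobi_of_mem_center _ hb.Rmap_apply_mem_center⟩
end
end
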